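/- arXiv:1002.0780 — 6 statements merged into one kernel-verified Lean document; each statement's English description precedes it below -/
import Mathlib

section
/- Let K > 2 be a real number, let H ∈ [1/2 + 1/K, 1), and let t > 0. Then ∫_0^t (z_H(t,s))^K ds = ∞, i.e. the K-th power of the Molchan–Golosov kernel s ↦ z_H(t,s) is not integrable on (0,t). -/
open MeasureTheory Set

/-- Normalizing constant of the Mandelbrot–Van Ness kernel. -/
noncomputable def C_H (H : ℝ) : ℝ :=
  Real.sqrt (2 * H * Real.sin (Real.pi * H) * Real.Gamma (2 * H)) / Real.Gamma (H + 1/2)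

/-- Normalizing constant of the Molchan–Golosov kernel. -/
noncomputable def c_H (H : ℝ) : ℝ :=
  (Real.Gamma (H + 1/2))⁻¹ *
    Real.sqrt (2 * H * Real.Gamma (H + 1/2) * Real.Gamma (3/2 - H) / Real.Gamma (2 - 2*H))

/-- Mandelbrot–Van Ness kernel `f_H(t,s) = C_H((t-s)_+^{H-1/2} - (-s)_+^{H-1/2})`. -/
noncomputable def f_H (H t s : ℝ) : ℝ :=
  C_H H * (max (t - s) 0 ^ (H - 1/2) - max (-s) 0 ^ (H - 1/2))

/-- Molchan–Golosov kernel for `H ∈ (1/2,1)`: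
`z_H(t,s) = (H-1/2) c_H s^{1/2-H} ∫_s^t u^{H-1/2}(u-s)^{H-3/2} du` for `0 < s < t`,
and `0` otherwise. -/
noncomputable def z_H (H t s : ℝ) : ℝ :=
  if 0 < s ∧ s < t then
    (H - 1/2) * c_H H * s ^ ((1:ℝ)/2 - H) *
      ∫ u in Set.Ioo s t, u ^ (H - 1/2) * (u - s) ^ (H - 3/2)
  else 0

/-!
For `s < t/2` the inner integral of `z_H(t,s)` is bounded below by its part over `(t/2, t)`,
where the integrand is at least `(t/2)^{H-1/2} t^{H-3/2}`. Hence `z_H(t,s) ≥ B s^{1/2-H}` near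
`0` with `B > 0`, and `z_H(t,s)^K ≥ B^K s^{(1/2-H)K}`, whose exponent is `≤ -1` exactly when
`H ≥ 1/2 + 1/K`; such a power is not integrable at `0`.
-/

lemma c_H_pos {H : ℝ} (h0 : 0 < H) (h1 : H < 1) : 0 < c_H H := by
  have hΓ₁ := Real.Gamma_pos_of_pos (show 0 < H + 1/2 by linarith)
  have hΓ₂ := Real.Gamma_pos_of_pos (show 0 < 3/2 - H by linarith)
  have hΓ₃ := Real.Gamma_pos_of_pos (show 0 < 2 - 2*H by linarith)
  unfold c_H
  positivity

lemma integrableOn_rpow_mul_sub_rpow {a b s t : ℝ} (hs : 0 ≤ s) (ha : 0 ≤ a) (hb : -1 < b) :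
    IntegrableOn (fun u : ℝ => u ^ a * (u - s) ^ b) (Ioo s t) := by
  have hshift : IntegrableOn (fun u : ℝ => (u - s) ^ b) (Ioo s t) := by
    have h := (intervalIntegral.intervalIntegrable_rpow' (a := 0) (b := t - s) hb).comp_sub_right s
    rw [zero_add, sub_add_cancel] at h
    exact h.1.mono_set Ioo_subset_Ioc_self
  refine (hshift.const_mul (t ^ a)).mono' ?_ ?_
  · refine ContinuousOn.aestronglyMeasurable ?_ measurableSet_Ioo
    exact (continuousOn_id.rpow_const fun _ _ => Or.inr ha).mul
      ((continuousOn_id.sub continuousOn_const).rpow_const fun u hu =>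
        Or.inl (sub_pos.mpr hu.1).ne')
  · filter_upwards [ae_restrict_mem measurableSet_Ioo] with u hu
    have hu0 : 0 ≤ u := hs.trans hu.1.le
    have hus : 0 ≤ u - s := sub_nonneg.mpr hu.1.le
    rw [Real.norm_of_nonneg (by positivity)]
    gcongr
    exact hu.2.le

lemma le_setIntegral_rpow_mul_sub_rpow {a b s t : ℝ} (hs : 0 ≤ s) (hst : s ≤ t / 2)
    (ha : 0 ≤ a) (hb : b ∈ Ioc (-1) 0) :
    (t / 2) ^ a * t ^ b * (t / 2) ≤ ∫ u in Ioo s t, u ^ a * (u - s) ^ b := by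
  have hint := integrableOn_rpow_mul_sub_rpow (t := t) hs ha hb.1
  have hsub : Ioo (t / 2) t ⊆ Ioo s t := Ioo_subset_Ioo_left hst
  calc (t / 2) ^ a * t ^ b * (t / 2) = ∫ _ in Ioo (t / 2) t, (t / 2) ^ a * t ^ b := by
        rw [setIntegral_const, measureReal_def, Real.volume_Ioo,
          ENNReal.toReal_ofReal (by linarith), smul_eq_mul]
        ring
    _ ≤ ∫ u in Ioo (t / 2) t, u ^ a * (u - s) ^ b := by
        refine setIntegral_mono_on (integrableOn_const measure_Ioo_lt_top.ne)
          (hint.mono_set hsub) measurableSet_Ioo fun u hu => ?_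
        have ht2 : 0 ≤ t / 2 := hs.trans hst
        have hus : 0 < u - s := by linarith [hu.1]
        exact mul_le_mul (Real.rpow_le_rpow ht2 hu.1.le ha)
          (Real.rpow_le_rpow_of_nonpos hus (by linarith [hu.2]) hb.2)
          (Real.rpow_nonneg (by linarith) _) (Real.rpow_nonneg (by linarith [hu.1]) _)
    _ ≤ ∫ u in Ioo s t, u ^ a * (u - s) ^ b := by
        refine setIntegral_mono_set hint ?_ hsub.eventuallyLE
        filter_upwards [ae_restrict_mem measurableSet_Ioo] with u hu
        have hu0 : 0 ≤ u := hs.trans hu.1.le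
        have hus : 0 ≤ u - s := sub_nonneg.mpr hu.1.le
        positivity

lemma exists_pos_mul_rpow_le_z_H {H t : ℝ} (hH : H ∈ Ioo (1/2) 1) (ht : 0 < t) :
    ∃ B > 0, ∀ s ∈ Ioo 0 (t / 2), B * s ^ (1/2 - H) ≤ z_H H t s := by
  obtain ⟨hH₁, hH₂⟩ := hH
  have hC : 0 < (H - 1/2) * c_H H := mul_pos (by linarith) (c_H_pos (by linarith) hH₂)
  refine ⟨(H - 1/2) * c_H H * ((t / 2) ^ (H - 1/2) * t ^ (H - 3/2) * (t / 2)),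
    by positivity, fun s hs => ?_⟩
  rw [z_H, if_pos ⟨hs.1, by linarith [hs.2]⟩, mul_right_comm]
  have hs0 : 0 ≤ (H - 1/2) * c_H H * s ^ (1/2 - H) := by
    have := hs.1.le
    positivity
  exact mul_le_mul_of_nonneg_left
    (le_setIntegral_rpow_mul_sub_rpow hs.1.le hs.2.le (by linarith) ⟨by linarith, by linarith⟩)
    hs0

lemma lintegral_Ioo_ofReal_mul_rpow_eq_top {c q ε : ℝ} (hc : 0 < c) (hq : q ≤ -1)
    (hε : 0 < ε) : ∫⁻ s in Ioo 0 ε, ENNReal.ofReal (c * s ^ q) = ⊤ := by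
  by_contra h
  have hmeas : AEStronglyMeasurable (fun s : ℝ => c * s ^ q) (volume.restrict (Ioo 0 ε)) :=
    (continuousOn_const.mul (continuousOn_id.rpow_const fun s hs => Or.inl hs.1.ne'))
      |>.aestronglyMeasurable measurableSet_Ioo
  have hnonneg : 0 ≤ᵐ[volume.restrict (Ioo 0 ε)] fun s : ℝ => c * s ^ q := by
    filter_upwards [ae_restrict_mem measurableSet_Ioo] with s hs
    have := hs.1.le
    positivity
  have hint := (lintegral_ofReal_ne_top_iff_integrable hmeas hnonneg).mp h
  have hpow : IntegrableOn (fun s : ℝ => s ^ q) (Ioo 0 ε) :=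
    (integrable_const_mul_iff (isUnit_iff_ne_zero.mpr hc.ne') _).mp hint
  rw [intervalIntegral.integrableOn_Ioo_rpow_iff hε] at hpow
  linarith

/-- For real `K > 2`, `H ∈ [1/2 + 1/K, 1)` and `t > 0`, the `K`-th power of the
Molchan–Golosov kernel is not integrable on `(0,t)`: `∫_0^t (z_H(t,s))^K ds = ∞`. -/
theorem zH_pow_lintegral_eq_top (K H t : ℝ) (hK : 2 < K)
    (hH : H ∈ Set.Ico (1/2 + 1/K) (1:ℝ)) (ht : 0 < t) :
    ∫⁻ s in Set.Ioo (0:ℝ) t, ENNReal.ofReal (z_H H t s ^ K) = ⊤ := by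
  have hK0 : 0 < K := by linarith
  have hKinv : 0 < 1 / K := by positivity
  have hq : (1/2 - H) * K ≤ -1 := by
    have := mul_le_mul_of_nonneg_right (show 1/2 - H ≤ -(1 / K) by linarith [hH.1]) hK0.le
    rwa [neg_mul, one_div_mul_cancel hK0.ne'] at this
  obtain ⟨B, hB, hz⟩ := exists_pos_mul_rpow_le_z_H ⟨by linarith [hH.1], hH.2⟩ ht
  refine top_le_iff.mp <| le_trans ?_ <|
    lintegral_mono_set (Ioo_subset_Ioo_right (half_le_self ht.le))
  rw [← lintegral_Ioo_ofReal_mul_rpow_eq_top (Real.rpow_pos_of_pos hB K) hq (half_pos ht)]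
  refine setLIntegral_mono' measurableSet_Ioo fun s hs => ENNReal.ofReal_le_ofReal ?_
  have hs0 : 0 ≤ B * s ^ (1/2 - H) := by
    have := hs.1.le
    positivity
  calc B ^ K * s ^ ((1/2 - H) * K) = (B * s ^ (1/2 - H)) ^ K := by
        rw [Real.mul_rpow hB.le (Real.rpow_nonneg hs.1.le _), Real.rpow_mul hs.1.le]
    _ ≤ z_H H t s ^ K := Real.rpow_le_rpow hs0 (hz s hs) hK0.le
end

section
/- Let H ∈ (1/2,1), let K ≥ 2 be a real number, and let t > 0. Then ∫_{−∞}^t (f_H(t,s))^K ds < ∞, i.e. the K-th power of the Mandelbrot–Van Ness kernel s ↦ f_H(t,s) is integrable on (−∞, t). -/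
open MeasureTheory Set

/-!
Write `α = H - 1/2 ∈ (0, 1/2)`. On `[-1, t)` the kernel is bounded by `C_H (t + 1)^α`, so only
the tail matters. There concavity of `x ↦ x^α` gives `f_H(t,s) ≤ C_H α t (-s)^(α-1)`, and the
`K`-th power of this bound is integrable at `-∞` because `(α - 1) K ≤ 2 (α - 1) < -1`.
-/

lemma C_H_nonneg {H : ℝ} (hH : -1/2 ≤ H) : 0 ≤ C_H H :=
  div_nonneg (Real.sqrt_nonneg _) (Real.Gamma_nonneg_of_nonneg (by linarith))

lemma add_rpow_sub_rpow_le {x h p : ℝ} (hx : 0 < x) (hh : 0 ≤ h) (hp₀ : 0 ≤ p) (hp₁ : p ≤ 1) :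
    (x + h) ^ p - x ^ p ≤ p * h * x ^ (p - 1) := by
  have hbernoulli : (1 + h / x) ^ p ≤ 1 + p * (h / x) :=
    rpow_one_add_le_one_add_mul_self (by linarith [div_nonneg hh hx.le]) hp₀ hp₁
  have : (x + h) ^ p ≤ x ^ p + p * h * x ^ (p - 1) :=
    calc (x + h) ^ p = x ^ p * (1 + h / x) ^ p := by
          rw [← Real.mul_rpow hx.le (by positivity)]
          congr 1
          field_simp
      _ ≤ x ^ p * (1 + p * (h / x)) := by gcongr
      _ = x ^ p + p * h * x ^ (p - 1) := by
          rw [Real.rpow_sub_one hx.ne']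
          field_simp
  linarith

lemma f_H_nonneg {H t : ℝ} (hH : 1/2 ≤ H) (ht : 0 ≤ t) (s : ℝ) : 0 ≤ f_H H t s :=
  mul_nonneg (C_H_nonneg (by linarith)) <| sub_nonneg.2 <|
    Real.rpow_le_rpow (le_max_right _ _) (max_le_max (by linarith) le_rfl) (by linarith)

lemma f_H_le_of_le {H t a s : ℝ} (hH : 1/2 ≤ H) (has : a ≤ s) :
    f_H H t s ≤ C_H H * max (t - a) 0 ^ (H - 1/2) := by
  unfold f_H
  gcongr
  · exact C_H_nonneg (by linarith)
  · calc _ ≤ max (t - s) 0 ^ (H - 1/2) :=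
          sub_le_self _ (Real.rpow_nonneg (le_max_right _ _) _)
      _ ≤ _ := Real.rpow_le_rpow (le_max_right _ _) (max_le_max (by linarith) le_rfl)
          (by linarith)

lemma f_H_le_of_neg {H t s : ℝ} (hH₀ : 1/2 ≤ H) (hH₁ : H ≤ 3/2) (ht : 0 ≤ t) (hs : s < 0) :
    f_H H t s ≤ C_H H * (H - 1/2) * t * (-s) ^ (H - 3/2) := by
  have hconcave := add_rpow_sub_rpow_le (neg_pos.2 hs) ht (p := H - 1/2) (by linarith)
    (by linarith)
  rw [neg_add_eq_sub, show H - 1/2 - 1 = H - 3/2 by ring] at hconcave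
  unfold f_H
  rw [max_eq_left (by linarith), max_eq_left (by linarith), mul_assoc, mul_assoc]
  exact mul_le_mul_of_nonneg_left (by linarith) (C_H_nonneg (by linarith))

lemma f_H_rpow_le_of_neg {H K t s : ℝ} (hH₀ : 1/2 ≤ H) (hH₁ : H ≤ 3/2) (hK : 0 ≤ K)
    (ht : 0 ≤ t) (hs : s < 0) :
    f_H H t s ^ K ≤ (C_H H * (H - 1/2) * t) ^ K * (-s) ^ ((H - 3/2) * K) := by
  have hs' : 0 ≤ -s := by linarith
  calc f_H H t s ^ K ≤ (C_H H * (H - 1/2) * t * (-s) ^ (H - 3/2)) ^ K :=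
        Real.rpow_le_rpow (f_H_nonneg hH₀ ht s) (f_H_le_of_neg hH₀ hH₁ ht hs) hK
    _ = _ := by
        have : 0 ≤ C_H H * (H - 1/2) * t :=
          mul_nonneg (mul_nonneg (C_H_nonneg (by linarith)) (by linarith)) ht
        rw [Real.mul_rpow this (Real.rpow_nonneg hs' _), ← Real.rpow_mul hs']

lemma integrableOn_Iio_neg_rpow {β c : ℝ} (hβ : β < -1) (hc : 0 < c) :
    IntegrableOn (fun s : ℝ ↦ (-s) ^ β) (Iio (-c)) := by
  have h := integrableOn_Ioi_rpow_of_lt hβ hc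
  rw [← (Measure.measurePreserving_neg (volume : Measure ℝ)).integrableOn_comp_preimage
    (Homeomorph.neg ℝ).measurableEmbedding] at h
  simpa [Function.comp_def, neg_preimage, neg_Ioi] using h

lemma setLIntegral_ofReal_lt_top_of_le {α : Type*} [MeasurableSpace α] {μ : Measure α}
    {f g : α → ℝ} {s : Set α} (hs : MeasurableSet s) (hg : IntegrableOn g s μ)
    (hfg : ∀ x ∈ s, f x ≤ g x) :
    ∫⁻ x in s, ENNReal.ofReal (f x) ∂μ < ⊤ :=
  (setLIntegral_mono' hs fun x hx ↦ ENNReal.ofReal_le_ofReal (hfg x hx)).trans_lt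
    hg.lintegral_lt_top

/-- For `H ∈ (1/2,1)`, real `K ≥ 2` and `t > 0`, the `K`-th power of the
Mandelbrot–Van Ness kernel is integrable on `(−∞, t)`: `∫_{−∞}^t (f_H(t,s))^K ds < ∞`. -/
theorem fH_pow_lintegral_lt_top (H K t : ℝ) (hH : H ∈ Set.Ioo (1/2 : ℝ) 1)
    (hK : 2 ≤ K) (ht : 0 < t) :
    ∫⁻ s in Set.Iio t, ENNReal.ofReal (f_H H t s ^ K) < ⊤ := by
  obtain ⟨hH₀, hH₁⟩ := hH
  rw [← Iio_union_Ico_eq_Iio (show (-1 : ℝ) ≤ t by linarith), lintegral_union measurableSet_Ico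
    ((Iio_disjoint_Ici le_rfl).mono_right Ico_subset_Ici_self)]
  refine ENNReal.add_lt_top.2 ⟨?_, ?_⟩
  · have htail : IntegrableOn (fun s : ℝ ↦ (-s) ^ ((H - 3/2) * K)) (Iio (-1)) :=
      integrableOn_Iio_neg_rpow (by nlinarith) one_pos
    exact setLIntegral_ofReal_lt_top_of_le measurableSet_Iio
      (htail.const_mul ((C_H H * (H - 1/2) * t) ^ K)) fun s hs ↦
        f_H_rpow_le_of_neg hH₀.le (by linarith) (by linarith) ht.le (by linarith [mem_Iio.1 hs])
  · refine setLIntegral_ofReal_lt_top_of_le measurableSet_Ico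
      (integrableOn_const (by simp) (C := (C_H H * max (t + 1) 0 ^ (H - 1/2)) ^ K))
      fun s hs ↦ Real.rpow_le_rpow (f_H_nonneg hH₀.le ht.le s) ?_ (by linarith)
    simpa using f_H_le_of_le hH₀.le hs.1
end

section
/- Let H ∈ (1/2,1) and 0 < s < 1. Then (H−1/2)·∫_s^1 u^{H−1/2}(u−s)^{H−3/2} du ≥ (1/2)·(1−s)^{H−1/2}·(1 + s^{2H−1}). -/
open MeasureTheory Set

/-!
With `p = H - 1/2`, the function `F u = (u - s)^p (u^p + s^{2p} u^{-p}) / 2` vanishes at `u = s`,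
takes the value `(1 - s)^p (1 + s^{2p}) / 2` at `u = 1`, and its derivative on `(s, 1)` is
`p u^p (u - s)^{p-1} - p s (u - s)^{p-1} (u^{p-1} - s^{2p} u^{-p-1}) / 2`, which is at most
the integrand `p u^p (u - s)^{p-1}` because `s^{2p} ≤ u^{2p}`.
-/

namespace KernelIntegral

open Real intervalIntegral

theorem integrableOn_mul_sub_rpow {g : ℝ → ℝ} {a b r : ℝ} (hg : ContinuousOn g (Icc a b))
    (hr : -1 < r) : IntegrableOn (fun u => g u * (u - a) ^ r) (Icc a b) := by
  rcases le_or_gt a b with hab | hba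
  · have h := (intervalIntegrable_rpow' (a := 0) (b := b - a) hr).comp_sub_right a
    rw [zero_add, sub_add_cancel, intervalIntegrable_iff_integrableOn_Icc_of_le hab] at h
    exact h.continuousOn_mul hg isCompact_Icc
  · simp [Icc_eq_empty_of_lt hba]

noncomputable def primitive (s p u : ℝ) : ℝ :=
  (u - s) ^ p * (u ^ p + s ^ (2 * p) * u ^ (-p)) / 2

variable {s p u b : ℝ}

theorem primitive_self (hp : 0 < p) : primitive s p s = 0 := by
  simp [primitive, zero_rpow hp.ne']

theorem continuousOn_primitive (hs : 0 < s) (hp : 0 < p) (b : ℝ) :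
    ContinuousOn (primitive s p) (Icc s b) := by
  have hpos : ∀ u ∈ Icc s b, u ≠ 0 := fun u hu => (hs.trans_le hu.1).ne'
  unfold primitive
  exact (((continuousOn_id.sub continuousOn_const).rpow_const fun _ _ => Or.inr hp.le).mul
    ((continuousOn_id.rpow_const fun _ _ => Or.inr hp.le).add (continuousOn_const.mul
      (continuousOn_id.rpow_const fun u hu => Or.inl (hpos u hu))))).div_const 2

theorem hasDerivAt_primitive (hs : 0 < s) (hsu : s < u) :
    HasDerivAt (primitive s p)
      ((p * (u - s) ^ (p - 1) * (u ^ p + s ^ (2 * p) * u ^ (-p))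
        + (u - s) ^ p * (p * u ^ (p - 1) + s ^ (2 * p) * (-p * u ^ (-p - 1)))) / 2) u := by
  have hu : u ≠ 0 := (hs.trans hsu).ne'
  have hsub : HasDerivAt (fun x => (x - s) ^ p) (p * (u - s) ^ (p - 1)) u := by
    simpa using ((hasDerivAt_id u).sub_const s).rpow_const (p := p) (Or.inl (sub_pos.2 hsu).ne')
  have hpow := hasDerivAt_rpow_const (p := p) (Or.inl hu)
  have hinv := hasDerivAt_rpow_const (p := -p) (Or.inl hu)
  exact (hsub.mul (hpow.add (hinv.const_mul (s ^ (2 * p))))).div_const 2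

theorem deriv_primitive_le (hs : 0 < s) (hsu : s < u) (hp : 0 ≤ p) :
    (p * (u - s) ^ (p - 1) * (u ^ p + s ^ (2 * p) * u ^ (-p))
        + (u - s) ^ p * (p * u ^ (p - 1) + s ^ (2 * p) * (-p * u ^ (-p - 1)))) / 2
      ≤ p * (u ^ p * (u - s) ^ (p - 1)) := by
  have hu : 0 < u := hs.trans hsu
  have hus : 0 < u - s := sub_pos.2 hsu
  have hsub : (u - s) ^ p = (u - s) ^ (p - 1) * (u - s) := by
    rw [← rpow_add_one hus.ne', sub_add_cancel]
  have hpow : u ^ p = u ^ (p - 1) * u := by rw [← rpow_add_one hu.ne', sub_add_cancel]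
  have hinv : u ^ (-p) = u ^ (-p - 1) * u := by rw [← rpow_add_one hu.ne', sub_add_cancel]
  have hratio : s ^ (2 * p) * u ^ (-p - 1) ≤ u ^ (p - 1) := by
    calc s ^ (2 * p) * u ^ (-p - 1) ≤ u ^ (2 * p) * u ^ (-p - 1) := by
          gcongr
      _ = u ^ (p - 1) := by rw [← rpow_add hu]; ring_nf
  have hgap : 0 ≤ p * (u - s) ^ (p - 1) * s * (u ^ (p - 1) - s ^ (2 * p) * u ^ (-p - 1)) := by
    have := rpow_nonneg hus.le (p - 1)
    have := sub_nonneg.2 hratio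
    positivity
  rw [hsub, hpow, hinv]
  linear_combination (1 / 2 : ℝ) * hgap

theorem primitive_le_integral (hs : 0 < s) (hsb : s ≤ b) (hp : 0 < p) :
    primitive s p b ≤ p * ∫ u in s..b, u ^ p * (u - s) ^ (p - 1) := by
  have hint : IntegrableOn (fun u => p * (u ^ p * (u - s) ^ (p - 1))) (Icc s b) :=
    (integrableOn_mul_sub_rpow (continuousOn_id.rpow_const fun _ _ => Or.inr hp.le)
      (by linarith)).const_mul p
  have h := sub_le_integral_of_hasDeriv_right_of_le hsb (continuousOn_primitive hs hp b)
    (fun u hu => (hasDerivAt_primitive hs hu.1).hasDerivWithinAt) hint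
    (fun u hu => deriv_primitive_le hs hu.1 hp.le)
  rwa [primitive_self hp, sub_zero, intervalIntegral.integral_const_mul] at h

end KernelIntegral

/-- For `H ∈ (1/2,1)` and `0 < s < 1`:
`(H−1/2)∫_s^1 u^{H−1/2}(u−s)^{H−3/2} du ≥ (1/2)(1−s)^{H−1/2}(1 + s^{2H−1})`. -/
theorem kernel_integral_lower_bound (H s : ℝ) (hH : H ∈ Set.Ioo (1/2 : ℝ) 1)
    (hs : s ∈ Set.Ioo (0:ℝ) 1) :
    (1/2) * (1 - s) ^ (H - 1/2) * (1 + s ^ (2*H - 1))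
      ≤ (H - 1/2) * ∫ u in Set.Ioo s 1, u ^ (H - 1/2) * (u - s) ^ (H - 3/2) := by
  have h := KernelIntegral.primitive_le_integral hs.1 hs.2.le (sub_pos.2 hH.1)
  rw [intervalIntegral.integral_of_le hs.2.le, integral_Ioc_eq_integral_Ioo] at h
  rw [show H - 3/2 = H - 1/2 - 1 by ring, show 2*H - 1 = 2 * (H - 1/2) by ring]
  refine le_of_eq_of_le ?_ h
  simp only [KernelIntegral.primitive, Real.one_rpow]
  ring
end

section
/- Let H ∈ (1/2,1). Then ∫_0^1 (z_H(1,s))^3 ds ≥ (c_H^3/8)·∫_0^1 s^{3(1/2−H)}(1−s)^{3(H−1/2)}(1 + s^{2H−1})^3 ds. -/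
open MeasureTheory Set

/-!
With `p = H - 1/2`, the inner integral is bounded below by the fundamental theorem of calculus
applied to `F u = u^p (u-s)^p - (1-s)^p u^{2p} / 2`: since `(u-s)^p ≤ (1-s)^p u^p` on `[s,1]`,
`F'(u) ≤ p u^p (u-s)^{p-1}`, and `F 1 - F s = (1-s)^p (1 + s^{2p}) / 2`. This gives
`z_H(1,s) ≥ (c_H/2) s^{1/2-H} (1-s)^{H-1/2} (1 + s^{2H-1})` pointwise; cube and integrate.
-/

lemma c_H_nonneg {H : ℝ} (hH : -(1/2) < H) : 0 ≤ c_H H :=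
  mul_nonneg (inv_nonneg.2 (Real.Gamma_pos_of_pos (by linarith)).le) (Real.sqrt_nonneg _)

lemma sub_rpow_le_one_sub_rpow_mul_rpow {p s u : ℝ} (hp : 0 ≤ p) (hs : 0 ≤ s) (hsu : s ≤ u)
    (hu : u ≤ 1) : (u - s) ^ p ≤ (1 - s) ^ p * u ^ p := by
  rw [← Real.mul_rpow (by linarith) (by linarith)]
  exact Real.rpow_le_rpow (by linarith) (by nlinarith) hp

lemma integrableOn_rpow_mul_sub_rpow_sub_one {p s b : ℝ} (hp : 0 < p) (hsb : s ≤ b) :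
    IntegrableOn (fun u : ℝ => u ^ p * (u - s) ^ (p - 1)) (Icc s b) := by
  have hsing : IntervalIntegrable (fun u : ℝ => (u - s) ^ (p - 1)) volume s b := by
    simpa using (intervalIntegral.intervalIntegrable_rpow' (a := 0) (b := b - s)
      (by linarith : -1 < p - 1)).comp_sub_right s
  have hcont : ContinuousOn (fun u : ℝ => u ^ p) (uIcc s b) :=
    (continuous_id.rpow_const fun _ => Or.inr hp.le).continuousOn
  exact (intervalIntegrable_iff_integrableOn_Icc_of_le hsb).1 (hsing.continuousOn_mul hcont)

lemma hasDerivAt_rpow_mul_sub_rpow {p s u : ℝ} (hu : u ≠ 0) (hus : u ≠ s) :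
    HasDerivAt (fun u : ℝ => u ^ p * (u - s) ^ p)
      (p * u ^ (p - 1) * (u - s) ^ p + p * (u ^ p * (u - s) ^ (p - 1))) u := by
  have hsub : HasDerivAt (fun u : ℝ => (u - s) ^ p) (p * (u - s) ^ (p - 1)) u := by
    simpa using ((hasDerivAt_id u).sub_const s).rpow_const (Or.inl (sub_ne_zero.2 hus))
  exact ((Real.hasDerivAt_rpow_const (p := p) (Or.inl hu)).mul hsub).congr_deriv (by ring)

lemma one_sub_rpow_mul_one_add_rpow_le_integral {p s : ℝ} (hp : 0 < p) (hs : 0 < s)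
    (hs1 : s < 1) :
    (1 - s) ^ p * (1 + s ^ (2 * p)) / 2 ≤ p * ∫ u in Ioo s 1, u ^ p * (u - s) ^ (p - 1) := by
  set D := (1 - s) ^ p
  set F : ℝ → ℝ := fun u => u ^ p * (u - s) ^ p - D * u ^ (2 * p) / 2
  set F' : ℝ → ℝ := fun u =>
    p * u ^ (p - 1) * (u - s) ^ p + p * (u ^ p * (u - s) ^ (p - 1)) - D * (p * u ^ (2 * p - 1))
  have hcont : ContinuousOn F (Icc s 1) := by fun_prop (disch := positivity)
  have hderiv : ∀ u ∈ Ioo s 1, HasDerivAt F (F' u) u := by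
    intro u hu
    have hu0 : u ≠ 0 := (hs.trans hu.1).ne'
    exact ((hasDerivAt_rpow_mul_sub_rpow (p := p) hu0 hu.1.ne').sub
      (((Real.hasDerivAt_rpow_const (p := 2 * p) (Or.inl hu0)).const_mul D).div_const 2))
      |>.congr_deriv (by ring)
  have hbound : ∀ u ∈ Ioo s 1, F' u ≤ p * (u ^ p * (u - s) ^ (p - 1)) := by
    intro u hu
    have hu0 : 0 < u := hs.trans hu.1
    have hsplit : u ^ (2 * p - 1) = u ^ (p - 1) * u ^ p := by
      rw [← Real.rpow_add hu0]; congr 1; ring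
    have := mul_le_mul_of_nonneg_left
      (sub_rpow_le_one_sub_rpow_mul_rpow hp.le hs.le hu.1.le hu.2.le)
      (mul_nonneg hp.le (Real.rpow_nonneg hu0.le (p - 1)))
    simp only [F', hsplit]
    linarith
  have hFTC := intervalIntegral.sub_le_integral_of_hasDeriv_right_of_le hs1.le hcont
    (fun u hu => (hderiv u hu).hasDerivWithinAt)
    ((integrableOn_rpow_mul_sub_rpow_sub_one hp hs1.le).const_mul p) hbound
  calc (1 - s) ^ p * (1 + s ^ (2 * p)) / 2 = F 1 - F s := by
        simp only [F, D, Real.one_rpow, Real.zero_rpow hp.ne', sub_self, one_mul, mul_one,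
          mul_zero, zero_sub, sub_neg_eq_add]
        ring
    _ ≤ ∫ u in s..1, p * (u ^ p * (u - s) ^ (p - 1)) := hFTC
    _ = p * ∫ u in Ioo s 1, u ^ p * (u - s) ^ (p - 1) := by
        rw [intervalIntegral.integral_of_le hs1.le, integral_Ioc_eq_integral_Ioo,
          integral_const_mul]

lemma c_H_div_two_mul_le_z_H {H s : ℝ} (hH : 1/2 < H) (hs : 0 < s) (hs1 : s < 1) :
    c_H H / 2 * (s ^ ((1:ℝ)/2 - H) * (1 - s) ^ (H - 1/2) * (1 + s ^ (2 * H - 1)))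
      ≤ z_H H 1 s := by
  have hinner := one_sub_rpow_mul_one_add_rpow_le_integral (p := H - 1/2) (by linarith) hs hs1
  rw [show 2 * (H - 1/2) = 2 * H - 1 by ring, show H - 1/2 - 1 = H - 3/2 by ring] at hinner
  have hfactor : 0 ≤ c_H H * s ^ ((1:ℝ)/2 - H) :=
    mul_nonneg (c_H_nonneg (by linarith)) (Real.rpow_nonneg hs.le _)
  rw [z_H, if_pos ⟨hs, hs1⟩]
  calc c_H H / 2 * (s ^ ((1:ℝ)/2 - H) * (1 - s) ^ (H - 1/2) * (1 + s ^ (2 * H - 1)))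
      = c_H H * s ^ ((1:ℝ)/2 - H) * ((1 - s) ^ (H - 1/2) * (1 + s ^ (2 * H - 1)) / 2) := by
        ring
    _ ≤ _ := mul_le_mul_of_nonneg_left hinner hfactor
    _ = _ := by ring

/-- For `H ∈ (1/2,1)`:
`∫_0^1 (z_H(1,s))^3 ds ≥ (c_H^3/8) ∫_0^1 s^{3(1/2−H)}(1−s)^{3(H−1/2)}(1+s^{2H−1})^3 ds`
(in the extended reals). -/
theorem zH_cube_integral_lower_bound (H : ℝ) (hH : H ∈ Set.Ioo (1/2 : ℝ) 1) :
    ENNReal.ofReal (c_H H ^ 3 / 8) *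
        ∫⁻ s in Set.Ioo (0:ℝ) 1,
          ENNReal.ofReal
            (s ^ (3 * ((1:ℝ)/2 - H)) * (1 - s) ^ (3 * (H - 1/2)) * (1 + s ^ (2*H - 1)) ^ 3)
      ≤ ∫⁻ s in Set.Ioo (0:ℝ) 1, ENNReal.ofReal (z_H H 1 s ^ 3) := by
  rw [← lintegral_const_mul' _ _ ENNReal.ofReal_ne_top]
  refine setLIntegral_mono_ae' measurableSet_Ioo (Filter.Eventually.of_forall ?_)
  rintro s ⟨hs, hs1⟩
  have hc : 0 ≤ c_H H := c_H_nonneg (by linarith [hH.1])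
  have hbound := c_H_div_two_mul_le_z_H hH.1 hs hs1
  rw [← ENNReal.ofReal_mul (by positivity)]
  refine ENNReal.ofReal_le_ofReal (le_of_eq_of_le ?_ (pow_le_pow_left₀ (by positivity) hbound 3))
  rw [mul_comm (3 : ℝ), mul_comm (3 : ℝ), Real.rpow_mul hs.le, Real.rpow_mul (by linarith),
    Real.rpow_ofNat, Real.rpow_ofNat]
  ring
end

section
/- Let p ∈ (0, 1/3). Then (1/8)·∫_0^1 s^{−3p}(1−s)^{3p}(1 + s^{2p})^3 ds ≥ 1/(3p+1) + 9p^3·(38p^2 + 21p + 3)/∏_{k=1}^6 (kp+1). -/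
/-!
With `a = s ^ p` the integrand is `(1 - s) ^ (3p) ((a³ + a⁻³) + 3 (a + a⁻¹))`, and
`y + y⁻¹ = 2 cosh (log y) ≥ 2 + (log y)²` bounds it below by `(1 - s) ^ (3p) (8 + 12 p² (log s)²)`.
Truncating `-log s = -log (1 - t) ≥ t + t² / 2` at `t = 1 - s` leaves `t ^ (3p)` times a quartic
in `t`, whose integral is an explicit sum of terms `c / (3p + k + 1)`. Comparing that sum with the
claimed bound clears to `p²` times a degree-8 polynomial that is positive on `(0, 1/3)`.
-/
open MeasureTheory Set Real

lemma one_add_sq_div_two_le_cosh (x : ℝ) : 1 + x ^ 2 / 2 ≤ cosh x := by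
  have h := sum_le_hasSum (Finset.range 2) (fun n _ => ?_) (hasSum_cosh x)
  · simpa [Finset.sum_range_succ, Nat.factorial] using h
  · exact div_nonneg (by rw [pow_mul]; positivity) (by positivity)

lemma add_sq_div_two_le_neg_log_one_sub {x : ℝ} (h0 : 0 ≤ x) (h1 : x < 1) :
    x + x ^ 2 / 2 ≤ -log (1 - x) := by
  have h := sum_le_hasSum (Finset.range 2) (fun n _ => by positivity)
    (hasSum_pow_div_log_of_abs_lt_one (abs_lt.2 ⟨by linarith, h1⟩))
  norm_num [Finset.sum_range_succ] at h
  linarith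

lemma two_add_log_sq_le_add_inv {y : ℝ} (hy : 0 < y) : 2 + log y ^ 2 ≤ y + y⁻¹ := by
  have := one_add_sq_div_two_le_cosh (log y)
  rw [cosh_log hy] at this
  linarith

lemma eight_add_twelve_mul_log_sq_le {a : ℝ} (ha : 0 < a) :
    8 + 12 * log a ^ 2 ≤ (1 + a ^ 2) ^ 3 / a ^ 3 := by
  have h1 := two_add_log_sq_le_add_inv ha
  have h3 := two_add_log_sq_le_add_inv (pow_pos ha 3)
  rw [log_pow, Nat.cast_ofNat] at h3
  have expand : (1 + a ^ 2) ^ 3 / a ^ 3 = (a ^ 3 + (a ^ 3)⁻¹) + 3 * (a + a⁻¹) := by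
    field_simp
    ring
  rw [expand]
  nlinarith

lemma integrableOn_one_sub_rpow {r : ℝ} (hr : -1 < r) :
    IntegrableOn (fun s : ℝ => (1 - s) ^ r) (Ioo 0 1) := by
  have h := (intervalIntegral.intervalIntegrable_rpow' hr (a := 0) (b := 1)).comp_sub_left 1
  rw [← intervalIntegrable_iff_integrableOn_Ioo_of_le zero_le_one]
  simpa using h.symm

lemma integral_one_sub_rpow {r : ℝ} (hr : -1 < r) :
    ∫ s in Ioo 0 1, (1 - s) ^ r = 1 / (r + 1) := by
  rw [← integral_Ioc_eq_integral_Ioo, ← intervalIntegral.integral_of_le zero_le_one,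
    intervalIntegral.integral_comp_sub_left (fun x : ℝ => x ^ r), sub_self, sub_zero,
    integral_rpow (Or.inl hr), one_rpow, zero_rpow (by linarith)]
  ring

lemma one_sub_rpow_mul_pow_eqOn (r : ℝ) (k : ℕ) :
    EqOn (fun s : ℝ => (1 - s) ^ r * (1 - s) ^ k) (fun s => (1 - s) ^ (r + k)) (Ioo 0 1) :=
  fun s hs => (rpow_add_natCast (by linarith [hs.2]) r k).symm

lemma integrableOn_one_sub_rpow_mul_pow {r : ℝ} (hr : -1 < r) (k : ℕ) :
    IntegrableOn (fun s : ℝ => (1 - s) ^ r * (1 - s) ^ k) (Ioo 0 1) :=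
  (integrableOn_congr_fun (one_sub_rpow_mul_pow_eqOn r k) measurableSet_Ioo).2
    (integrableOn_one_sub_rpow (by linarith [k.cast_nonneg (α := ℝ)]))

lemma integral_one_sub_rpow_mul_pow {r : ℝ} (hr : -1 < r) (k : ℕ) :
    ∫ s in Ioo 0 1, (1 - s) ^ r * (1 - s) ^ k = 1 / (r + k + 1) := by
  rw [setIntegral_congr_fun measurableSet_Ioo (one_sub_rpow_mul_pow_eqOn r k),
    integral_one_sub_rpow (by linarith [k.cast_nonneg (α := ℝ)])]

lemma integrableOn_one_sub_rpow_mul_sum {ι : Type*} {r : ℝ} (hr : -1 < r) (t : Finset ι)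
    (c : ι → ℝ) (e : ι → ℕ) :
    IntegrableOn (fun s : ℝ => (1 - s) ^ r * ∑ i ∈ t, c i * (1 - s) ^ e i) (Ioo 0 1) := by
  simp_rw [Finset.mul_sum, mul_left_comm _ (c _)]
  exact integrable_finsetSum _ fun i _ => (integrableOn_one_sub_rpow_mul_pow hr (e i)).const_mul _

lemma integral_one_sub_rpow_mul_sum {ι : Type*} {r : ℝ} (hr : -1 < r) (t : Finset ι)
    (c : ι → ℝ) (e : ι → ℕ) :
    ∫ s in Ioo 0 1, (1 - s) ^ r * ∑ i ∈ t, c i * (1 - s) ^ e i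
      = ∑ i ∈ t, c i / (r + e i + 1) := by
  simp_rw [Finset.mul_sum, mul_left_comm _ (c _)]
  rw [integral_finsetSum _ fun i _ => (integrableOn_one_sub_rpow_mul_pow hr (e i)).const_mul _]
  refine Finset.sum_congr rfl fun i _ => ?_
  rw [integral_const_mul, integral_one_sub_rpow_mul_pow hr, mul_one_div]

lemma alpha_p1_integrand_lower_bound (p : ℝ) {s : ℝ} (hs : s ∈ Ioo 0 1) :
    (1 - s) ^ (3 * p) * (8 + 12 * p ^ 2 * ((1 - s) + (1 - s) ^ 2 / 2) ^ 2)
      ≤ s ^ (-(3 * p)) * (1 - s) ^ (3 * p) * (1 + s ^ (2 * p)) ^ 3 := by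
  obtain ⟨hs0, hs1⟩ := hs
  have hw : ((1 - s) + (1 - s) ^ 2 / 2) ^ 2 ≤ log s ^ 2 := by
    have h := add_sq_div_two_le_neg_log_one_sub (x := 1 - s) (by linarith) (by linarith)
    rw [sub_sub_cancel] at h
    rw [← neg_sq (log s)]
    exact pow_le_pow_left₀ (by nlinarith) h 2
  have hfactor : s ^ (-(3 * p)) * (1 + s ^ (2 * p)) ^ 3 = (1 + (s ^ p) ^ 2) ^ 3 / (s ^ p) ^ 3 := by
    rw [rpow_neg hs0.le, mul_comm 3 p, mul_comm 2 p, ← Nat.cast_ofNat (R := ℝ) (n := 3),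
      ← Nat.cast_ofNat (R := ℝ) (n := 2), rpow_mul_natCast hs0.le, rpow_mul_natCast hs0.le]
    ring
  have key := eight_add_twelve_mul_log_sq_le (rpow_pos_of_pos hs0 p)
  rw [log_rpow hs0, mul_pow, ← mul_assoc, ← hfactor] at key
  calc (1 - s) ^ (3 * p) * (8 + 12 * p ^ 2 * ((1 - s) + (1 - s) ^ 2 / 2) ^ 2)
      ≤ (1 - s) ^ (3 * p) * (8 + 12 * p ^ 2 * log s ^ 2) := by gcongr
    _ ≤ (1 - s) ^ (3 * p) * (s ^ (-(3 * p)) * (1 + s ^ (2 * p)) ^ 3) := by gcongr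
    _ = s ^ (-(3 * p)) * (1 - s) ^ (3 * p) * (1 + s ^ (2 * p)) ^ 3 := by ring

lemma integrableOn_alpha_p1_integrand {p : ℝ} (hp0 : 0 ≤ p) (hp1 : 3 * p < 1) :
    IntegrableOn (fun s : ℝ => s ^ (-(3 * p)) * (1 - s) ^ (3 * p) * (1 + s ^ (2 * p)) ^ 3)
      (Ioo 0 1) := by
  have hmaj : IntegrableOn (fun s : ℝ => 8 * s ^ (-(3 * p))) (Ioo 0 1) :=
    ((intervalIntegrable_iff_integrableOn_Ioo_of_le zero_le_one).1
      (intervalIntegral.intervalIntegrable_rpow' (by linarith))).const_mul 8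
  refine hmaj.mono' (by fun_prop) ((ae_restrict_iff' measurableSet_Ioo).2 ?_)
  filter_upwards with s ⟨hs0, hs1⟩
  have h1 : (1 - s) ^ (3 * p) ≤ 1 := rpow_le_one (by linarith) (by linarith) (by linarith)
  have h2 : s ^ (2 * p) ≤ 1 := rpow_le_one hs0.le hs1.le (by linarith)
  have h8 : (1 + s ^ (2 * p)) ^ 3 ≤ 8 := by
    calc (1 + s ^ (2 * p)) ^ 3 ≤ 2 ^ 3 := by gcongr; linarith
      _ = 8 := by norm_num
  rw [norm_of_nonneg (by positivity)]
  calc s ^ (-(3 * p)) * (1 - s) ^ (3 * p) * (1 + s ^ (2 * p)) ^ 3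
      ≤ s ^ (-(3 * p)) * 1 * 8 := by gcongr
    _ = 8 * s ^ (-(3 * p)) := by ring

lemma alpha_p1_gap_numerator_nonneg {p : ℝ} (h0 : 0 < p) (h1 : p < 1 / 3) :
    0 ≤ 228 - 2709 / 2 * p - 13479 * p ^ 2 + 28854 * p ^ 3 + 362145 * p ^ 4
      + 1742877 / 2 * p ^ 5 + 919890 * p ^ 6 + 457326 * p ^ 7 + 87480 * p ^ 8 := by
  nlinarith [mul_pos h0 h0, mul_pos (mul_pos h0 h0) h0, sq_nonneg (p - 3/25),
    mul_nonneg (mul_nonneg h0.le h0.le) (sq_nonneg (p - 3/25)),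
    mul_nonneg (sq_nonneg p) (sq_nonneg (p - 3/25)),
    mul_nonneg (mul_nonneg (sq_nonneg p) (sq_nonneg p)) (sq_nonneg (p - 3/25)),
    pow_pos h0 4, pow_pos h0 5, pow_pos h0 6, pow_pos h0 7, pow_pos h0 8]

lemma alpha_p1_rhs_le_moment_bound {p : ℝ} (h0 : 0 < p) (h1 : p < 1 / 3) :
    1 / (3 * p + 1) + 9 * p ^ 3 * (38 * p ^ 2 + 21 * p + 3) /
        ((p + 1) * (2 * p + 1) * (3 * p + 1) * (4 * p + 1) * (5 * p + 1) * (6 * p + 1))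
      ≤ 1 / 8 * (8 / (3 * p + 1) + 12 * p ^ 2 / (3 * p + 3) + 12 * p ^ 2 / (3 * p + 4)
        + 3 * p ^ 2 / (3 * p + 5)) := by
  have hD : 0 < (p + 1) * (2 * p + 1) * (3 * p + 1) * (4 * p + 1) * (5 * p + 1) * (6 * p + 1) := by
    apply_rules [mul_pos] <;> linarith
  rw [← sub_nonneg]
  have gap : 1 / 8 * (8 / (3 * p + 1) + 12 * p ^ 2 / (3 * p + 3) + 12 * p ^ 2 / (3 * p + 4)
        + 3 * p ^ 2 / (3 * p + 5)) - (1 / (3 * p + 1) + 9 * p ^ 3 * (38 * p ^ 2 + 21 * p + 3) /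
        ((p + 1) * (2 * p + 1) * (3 * p + 1) * (4 * p + 1) * (5 * p + 1) * (6 * p + 1)))
      = p ^ 2 * (228 - 2709 / 2 * p - 13479 * p ^ 2 + 28854 * p ^ 3 + 362145 * p ^ 4
          + 1742877 / 2 * p ^ 5 + 919890 * p ^ 6 + 457326 * p ^ 7 + 87480 * p ^ 8)
        / (4 * (3 * p + 3) * (3 * p + 4) * (3 * p + 5) *
          ((p + 1) * (2 * p + 1) * (3 * p + 1) * (4 * p + 1) * (5 * p + 1) * (6 * p + 1))) := by
    field_simp
    ring
  rw [gap]
  have : 0 < (3 * p + 3) * (3 * p + 4) * (3 * p + 5) := by apply_rules [mul_pos] <;> linarith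
  have := alpha_p1_gap_numerator_nonneg h0 h1
  positivity

/-- For `p ∈ (0,1/3)`:
`(1/8)∫_0^1 s^{−3p}(1−s)^{3p}(1+s^{2p})^3 ds
  ≥ 1/(3p+1) + 9p^3(38p^2+21p+3)/∏_{k=1}^6 (kp+1)`. -/
theorem alpha_p1_lower_bound (p : ℝ) (hp : p ∈ Set.Ioo (0:ℝ) (1/3)) :
    1 / (3*p + 1) + 9 * p^3 * (38*p^2 + 21*p + 3) /
        ((p+1) * (2*p+1) * (3*p+1) * (4*p+1) * (5*p+1) * (6*p+1))
      ≤ (1/8) * ∫ s in Set.Ioo (0:ℝ) 1,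
          s ^ (-(3*p)) * (1 - s) ^ (3*p) * (1 + s ^ (2*p)) ^ 3 := by
  obtain ⟨hp0, hp1⟩ := hp
  have hr : -1 < 3 * p := by linarith
  set c : Fin 5 → ℝ := ![8, 0, 12 * p ^ 2, 12 * p ^ 2, 3 * p ^ 2]
  have hc (t : ℝ) : 8 + 12 * p ^ 2 * (t + t ^ 2 / 2) ^ 2 = ∑ k, c k * t ^ (k : ℕ) := by
    simp only [c, Fin.sum_univ_five, Fin.isValue, Matrix.cons_val_zero, Fin.coe_ofNat_eq_mod,
      Nat.zero_mod, Nat.one_mod, Nat.reduceMod, Nat.mod_succ, Matrix.cons_val_one, Matrix.cons_val,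
      pow_zero, pow_one, mul_one, zero_mul, add_zero]
    ring
  have hmono : ∫ s in Ioo 0 1, (1 - s) ^ (3 * p) * ∑ k, c k * (1 - s) ^ (k : ℕ)
      ≤ ∫ s in Ioo 0 1, s ^ (-(3 * p)) * (1 - s) ^ (3 * p) * (1 + s ^ (2 * p)) ^ 3 :=
    setIntegral_mono_on (integrableOn_one_sub_rpow_mul_sum hr _ _ _)
      (integrableOn_alpha_p1_integrand hp0.le (by linarith)) measurableSet_Ioo
      fun s hs => hc (1 - s) ▸ alpha_p1_integrand_lower_bound p hs
  rw [integral_one_sub_rpow_mul_sum hr] at hmono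
  norm_num [c, Fin.sum_univ_succ, add_assoc] at hmono
  linarith [alpha_p1_rhs_le_moment_bound hp0 hp1]
end

section
/- Let H ∈ (1/2,1) and t ∈ ℝ. For s > max(0, −t) and v ∈ ℝ define g_s(v) = z_H(t+s, v+s) − z_H(s, v+s). Then there exist constants S > max(0,−t) and C > 0 such that for all s > S: ∫_{−∞}^t ( g_s(v) − f_H(t,v) )^2 dv ≤ C·s^{2H−2}. -/
open MeasureTheory Set

/-! For `-s < v < t` both kernels are integrals over `u ∈ (max v 0, t)` against
`(u - v)^{H-3/2}`, and since `c_H = C_H` the error `g_s(v) - f_H(t,v)` equals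
`(H - 1/2) C_H ∫ (((u+s)/(v+s))^{H-1/2} - 1) (u - v)^{H-3/2} du`; for `v ≤ -s` only `-f_H(t,v)` is
left. Cut `(-∞, t)` at `-s` and `-s/2`. On `v ≤ -s` the error is `O((-v)^{H-3/2})`; on `(-s, -s/2)`,
where `u - v ≥ s/4`, it is `O(s^{2H-2} (v+s)^{1/2-H})`; on `[-s/2, t)` Bernoulli's inequality
`(1 + x)^{H-1/2} ≤ 1 + (H-1/2) x` makes it `O(s^{H-3/2})`. Each square integrates to `O(s^{2H-2})`.
-/

theorem intervalIntegrable_sub_rpow {r : ℝ} (hr : -1 < r) (c a b : ℝ) :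
    IntervalIntegrable (fun u => (u - c) ^ r) volume a b := by
  simpa using
    (intervalIntegral.intervalIntegrable_rpow' (a := a - c) (b := b - c) hr).comp_sub_right c

theorem intervalIntegrable_add_rpow_mul_sub_rpow {p r : ℝ} (hp : 0 ≤ p) (hr : -1 < r)
    (d c a b : ℝ) : IntervalIntegrable (fun u => (u + d) ^ p * (u - c) ^ r) volume a b :=
  (intervalIntegrable_sub_rpow hr c a b).continuousOn_mul
    ((Real.continuous_rpow_const hp).comp (continuous_add_const d)).continuousOn

theorem rpow_le_mul_rpow_of_div_le {x y c p : ℝ} (hx : 0 < x) (hc : 1 ≤ c)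
    (hp : p ∈ Icc (-1 : ℝ) 0) (hxy : x / c ≤ y) : y ^ p ≤ c * x ^ p := by
  have hc0 : 0 ≤ c := zero_le_one.trans hc
  calc y ^ p ≤ (x / c) ^ p := Real.rpow_le_rpow_of_nonpos (by positivity) hxy hp.2
    _ = c ^ (-p) * x ^ p := by
        rw [Real.div_rpow hx.le hc0, Real.rpow_neg hc0, div_eq_mul_inv, mul_comm]
    _ ≤ c * x ^ p := by
        gcongr
        exact Real.rpow_le_self_of_one_le hc (by linarith [hp.1])

theorem rpow_sq {x : ℝ} (hx : 0 ≤ x) (p : ℝ) : (x ^ p) ^ 2 = x ^ (2 * p) := by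
  rw [← Real.rpow_mul_natCast hx, mul_comm]
  norm_num

theorem setLIntegral_ofReal_sq_le {f g : ℝ → ℝ} {A : Set ℝ} (hA : MeasurableSet A)
    (hg : IntegrableOn (fun v => g v ^ 2) A) (hfg : ∀ v ∈ A, |f v| ≤ g v) :
    ∫⁻ v in A, ENNReal.ofReal (f v ^ 2) ≤ ENNReal.ofReal (∫ v in A, g v ^ 2) := by
  rw [ofReal_integral_eq_lintegral_ofReal hg (Filter.Eventually.of_forall fun v => sq_nonneg _)]
  refine setLIntegral_mono' hA fun v hv => ENNReal.ofReal_le_ofReal ?_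
  rw [← sq_abs]
  exact pow_le_pow_left₀ (abs_nonneg _) (hfg v hv) 2

theorem lintegral_Iio_le_add {f : ℝ → ENNReal} (a b t : ℝ) :
    ∫⁻ v in Iio t, f v ≤ (∫⁻ v in Iic a, f v) + (∫⁻ v in Ioo a b, f v) + ∫⁻ v in Ico b t, f v := by
  have hcover : Iio t ⊆ Iic a ∪ Ioo a b ∪ Ico b t := fun v hvt => by
    rcases le_or_gt v a with hva | hav
    · exact Or.inl (Or.inl hva)
    rcases lt_or_ge v b with hvb | hbv
    · exact Or.inl (Or.inr ⟨hav, hvb⟩)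
    · exact Or.inr ⟨hbv, hvt⟩
  calc ∫⁻ v in Iio t, f v ≤ ∫⁻ v in Iic a ∪ Ioo a b ∪ Ico b t, f v := lintegral_mono_set hcover
    _ ≤ (∫⁻ v in Iic a ∪ Ioo a b, f v) + ∫⁻ v in Ico b t, f v := lintegral_union_le _ _ _
    _ ≤ _ := by gcongr; exact lintegral_union_le _ _ _

section

variable {H : ℝ}

theorem C_H_pos (hH : H ∈ Ioo (1/2 : ℝ) 1) : 0 < C_H H := by
  obtain ⟨h1, h2⟩ := hH
  have hsin : 0 < Real.sin (Real.pi * H) :=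
    Real.sin_pos_of_pos_of_lt_pi (by nlinarith [Real.pi_pos]) (by nlinarith [Real.pi_pos])
  have hΓ2H : 0 < Real.Gamma (2 * H) := Real.Gamma_pos_of_pos (by linarith)
  exact div_pos (Real.sqrt_pos.mpr (by positivity)) (Real.Gamma_pos_of_pos (by linarith))

/-- The reflection formula `Γ(z)Γ(1-z) = π / sin(πz)` at `z = H + 1/2` and at `z = 2H`. -/
theorem c_H_eq_C_H (hH : H ∈ Ioo (1/2 : ℝ) 1) : c_H H = C_H H := by
  obtain ⟨h1, h2⟩ := hH
  have hcos : Real.cos (Real.pi * H) ≠ 0 :=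
    (Real.cos_neg_of_pi_div_two_lt_of_lt (by nlinarith [Real.pi_pos])
      (by nlinarith [Real.pi_pos])).ne
  have hsin : Real.sin (Real.pi * H) ≠ 0 :=
    (Real.sin_pos_of_pos_of_lt_pi (by nlinarith [Real.pi_pos]) (by nlinarith [Real.pi_pos])).ne'
  have hlow : Real.Gamma (H + 1/2) * Real.Gamma (3/2 - H) * Real.cos (Real.pi * H)
      = (1/2 - H) * Real.pi := by
    have hrefl := Real.Gamma_mul_Gamma_one_sub (H + 1/2)
    rw [show Real.pi * (H + 1/2) = Real.pi * H + Real.pi / 2 by ring, Real.sin_add_pi_div_two,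
      show 1 - (H + 1/2) = 1/2 - H by ring, eq_div_iff hcos] at hrefl
    rw [show 3/2 - H = (1/2 - H) + 1 by ring, Real.Gamma_add_one (by linarith)]
    linear_combination (1/2 - H) * hrefl
  have hhigh : Real.Gamma (2 * H) * Real.Gamma (2 - 2 * H) *
      (2 * Real.sin (Real.pi * H) * Real.cos (Real.pi * H)) = (1 - 2 * H) * Real.pi := by
    have hrefl := Real.Gamma_mul_Gamma_one_sub (2 * H)
    rw [show Real.pi * (2 * H) = 2 * (Real.pi * H) by ring, Real.sin_two_mul,
      eq_div_iff (by simp [hsin, hcos])] at hrefl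
    rw [show 2 - 2 * H = (1 - 2 * H) + 1 by ring, Real.Gamma_add_one (by linarith)]
    linear_combination (1 - 2 * H) * hrefl
  have hprod : Real.Gamma (H + 1/2) * Real.Gamma (3/2 - H)
      = Real.sin (Real.pi * H) * Real.Gamma (2 * H) * Real.Gamma (2 - 2 * H) :=
    mul_right_cancel₀ hcos (by linear_combination hlow - hhigh / 2)
  rw [c_H, C_H, mul_assoc (2 * H), hprod, inv_mul_eq_div]
  congr 2
  field_simp

theorem f_H_eq_integral {t v : ℝ} (hH : 1/2 < H) (hvt : v < t) :
    f_H H t v = (H - 1/2) * C_H H * ∫ u in (max v 0)..t, (u - v) ^ (H - 3/2) := by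
  have hmax : max (-v) 0 = max v 0 - v := by
    rw [← max_sub_sub_right, sub_self, zero_sub, max_comm]
  rw [intervalIntegral.integral_comp_sub_right (fun u => u ^ (H - 3/2)),
    integral_rpow (Or.inl (by linarith)), show H - 3/2 + 1 = H - 1/2 by ring, f_H,
    max_eq_left (sub_nonneg.mpr hvt.le), hmax, mul_comm (H - 1/2), mul_assoc,
    mul_div_cancel₀ _ (by linarith : H - 1/2 ≠ 0)]

theorem z_H_of_nonpos {τ x : ℝ} (hx : x ≤ 0) : z_H H τ x = 0 :=
  if_neg fun h => hx.not_gt h.1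

theorem z_H_eq_intervalIntegral {τ x : ℝ} (hx : 0 < x) (hxτ : x < τ) :
    z_H H τ x = (H - 1/2) * c_H H * x ^ ((1:ℝ)/2 - H) *
      ∫ w in x..τ, w ^ (H - 1/2) * (w - x) ^ (H - 3/2) := by
  rw [z_H, if_pos ⟨hx, hxτ⟩, intervalIntegral.integral_of_le hxτ.le,
    integral_Ioc_eq_integral_Ioo]

theorem z_H_sub_z_H (hH : 1/2 < H) {τ₀ τ₁ x : ℝ} (hx : 0 < x) (hxτ : x < τ₁) :
    z_H H τ₁ x - z_H H τ₀ x = (H - 1/2) * c_H H * x ^ ((1:ℝ)/2 - H) *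
      ∫ w in (max x τ₀)..τ₁, w ^ (H - 1/2) * (w - x) ^ (H - 3/2) := by
  rcases lt_or_ge x τ₀ with hxτ₀ | hτ₀x
  · have hint (a b : ℝ) :
        IntervalIntegrable (fun w => w ^ (H - 1/2) * (w - x) ^ (H - 3/2)) volume a b := by
      simpa using intervalIntegrable_add_rpow_mul_sub_rpow (by linarith) (by linarith) 0 x a b
    rw [z_H_eq_intervalIntegral hx hxτ, z_H_eq_intervalIntegral hx hxτ₀, ← mul_sub,
      intervalIntegral.integral_interval_sub_left (hint _ _) (hint _ _), max_eq_right hxτ₀.le]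
  · rw [z_H_eq_intervalIntegral hx hxτ, z_H, if_neg fun h => hτ₀x.not_gt h.2, sub_zero,
      max_eq_left hτ₀x]

noncomputable def shiftedKernelError (H t s v : ℝ) : ℝ :=
  z_H H (t + s) (v + s) - z_H H s (v + s) - f_H H t v

theorem shiftedKernelError_eq_neg {t s v : ℝ} (hH : 1/2 < H) (hvs : v ≤ -s)
    (hvt : v < t) :
    shiftedKernelError H t s v
      = -((H - 1/2) * C_H H * ∫ u in (max v 0)..t, (u - v) ^ (H - 3/2)) := by
  rw [shiftedKernelError, z_H_of_nonpos (by linarith), z_H_of_nonpos (by linarith),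
    f_H_eq_integral hH hvt, sub_self, zero_sub]

theorem shiftedKernelError_eq {t s v : ℝ} (hH : H ∈ Ioo (1/2 : ℝ) 1) (hsv : -s < v)
    (hvt : v < t) :
    shiftedKernelError H t s v = (H - 1/2) * C_H H *
      ∫ u in (max v 0)..t, (((u + s) / (v + s)) ^ (H - 1/2) - 1) * (u - v) ^ (H - 3/2) := by
  have hr : -1 < H - 3/2 := by linarith [hH.1]
  have hshift : ∫ w in (max (v + s) s)..(t + s), w ^ (H - 1/2) * (w - (v + s)) ^ (H - 3/2)
      = ∫ u in (max v 0)..t, (u + s) ^ (H - 1/2) * (u - v) ^ (H - 3/2) := by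
    rw [show max (v + s) s = max v 0 + s by rw [← max_add_add_right, zero_add],
      ← intervalIntegral.integral_comp_add_right]
    simp only [add_sub_add_right_eq_sub]
  have hsplit : ∫ u in (max v 0)..t, (((u + s) / (v + s)) ^ (H - 1/2) - 1) * (u - v) ^ (H - 3/2)
      = (v + s) ^ ((1:ℝ)/2 - H) * (∫ u in (max v 0)..t, (u + s) ^ (H - 1/2) * (u - v) ^ (H - 3/2))
        - ∫ u in (max v 0)..t, (u - v) ^ (H - 3/2) := by
    rw [← intervalIntegral.integral_const_mul, ← intervalIntegral.integral_sub
      ((intervalIntegrable_add_rpow_mul_sub_rpow (by linarith [hH.1]) hr s v _ _).const_mul _)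
      (intervalIntegrable_sub_rpow hr v _ _)]
    refine intervalIntegral.integral_congr fun u hu => ?_
    have hsu : 0 ≤ u + s := by
      linarith [hu.1, le_min (le_max_left v 0) hvt.le]
    simp only [Real.div_rpow hsu (by linarith : 0 ≤ v + s),
      show (1:ℝ)/2 - H = -(H - 1/2) by ring, Real.rpow_neg (by linarith : 0 ≤ v + s)]
    ring
  rw [shiftedKernelError, z_H_sub_z_H hH.1 (by linarith) (by linarith), hshift,
    f_H_eq_integral hH.1 hvt, c_H_eq_C_H hH, hsplit]
  ring

theorem abs_mul_integral_le {c t v B : ℝ} {F : ℝ → ℝ} (hH : H ∈ Ioo (1/2 : ℝ) 1) (hc : 0 ≤ c)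
    (hvt : v < t) (hF : ∀ u, v < u → |u| ≤ |t| → |F u| ≤ B) :
    |(H - 1/2) * c * ∫ u in (max v 0)..t, F u| ≤ c * (|t| + 1) * B := by
  have hB : 0 ≤ B := (abs_nonneg _).trans (hF t hvt le_rfl)
  have hlen : |t - max v 0| ≤ |t| := by
    rcases le_total v 0 with hv | hv
    · rw [max_eq_right hv, sub_zero]
    · rw [max_eq_left hv, abs_of_nonneg (by linarith), abs_of_nonneg (by linarith)]
      linarith
  have hint : ‖∫ u in (max v 0)..t, F u‖ ≤ B * |t - max v 0| := by
    refine intervalIntegral.norm_integral_le_of_norm_le_const fun u ⟨hlo, hhi⟩ => hF u ?_ ?_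
    · exact lt_of_le_of_lt (le_min (le_max_left v 0) hvt.le) hlo
    · have hmin : -|t| ≤ min (max v 0) t :=
        le_min ((neg_nonpos.mpr (abs_nonneg t)).trans (le_max_right v 0)) (neg_abs_le t)
      have hmax : max (max v 0) t ≤ |t| :=
        max_le (max_le (hvt.le.trans (le_abs_self t)) (abs_nonneg t)) (le_abs_self t)
      exact abs_le.mpr ⟨by linarith, hhi.trans hmax⟩
  have hH' : 0 ≤ H - 1/2 := by linarith [hH.1]
  rw [abs_mul, abs_of_nonneg (mul_nonneg hH' hc)]
  calc (H - 1/2) * c * |∫ u in (max v 0)..t, F u| ≤ 1 * c * (B * |t|) := by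
        gcongr
        · linarith [hH.2]
        · exact hint.trans (mul_le_mul_of_nonneg_left hlen hB)
    _ ≤ c * (|t| + 1) * B := by nlinarith [mul_nonneg hc hB]

theorem abs_shiftedKernelError_le_of_le_neg {t s v : ℝ} (hH : H ∈ Ioo (1/2 : ℝ) 1)
    (hts : 4 * |t| < s) (hvs : v ≤ -s) :
    |shiftedKernelError H t s v| ≤ C_H H * (|t| + 1) * (2 * (-v) ^ (H - 3/2)) := by
  have hvt : v < t := by linarith [neg_abs_le t, abs_nonneg t]
  rw [shiftedKernelError_eq_neg hH.1 hvs hvt, abs_neg]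
  refine abs_mul_integral_le hH (C_H_pos hH).le hvt fun u hvu hu => ?_
  rw [abs_of_nonneg (Real.rpow_nonneg (by linarith) _)]
  exact rpow_le_mul_rpow_of_div_le (by linarith [abs_nonneg t]) one_le_two
    ⟨by linarith [hH.1], by linarith [hH.2]⟩ (by linarith [neg_abs_le u])

theorem abs_shiftedKernelError_le_of_mem_Ioo {t s v : ℝ} (hH : H ∈ Ioo (1/2 : ℝ) 1)
    (hts : 4 * |t| < s) (hv : v ∈ Ioo (-s) (-s/2)) :
    |shiftedKernelError H t s v|
      ≤ C_H H * (|t| + 1) * (8 * s ^ (2*H - 2) * (v + s) ^ ((1:ℝ)/2 - H)) := by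
  obtain ⟨hsv, hvs⟩ := hv
  have hs : 0 < s := by linarith [abs_nonneg t]
  have hvt : v < t := by linarith [neg_abs_le t]
  have hp : 0 ≤ H - 1/2 := by linarith [hH.1]
  rw [shiftedKernelError_eq hH hsv hvt]
  refine abs_mul_integral_le hH (C_H_pos hH).le hvt fun u hvu hu => ?_
  have hu' := abs_le.mp hu
  have hvs0 : 0 < v + s := by linarith
  have hratio : 1 ≤ (u + s) / (v + s) := (one_le_div hvs0).mpr (by linarith)
  have hnum : (u + s) ^ (H - 1/2) ≤ 2 * s ^ (H - 1/2) :=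
    calc (u + s) ^ (H - 1/2) ≤ (2 * s) ^ (H - 1/2) :=
          Real.rpow_le_rpow (by linarith) (by linarith) hp
      _ = 2 ^ (H - 1/2) * s ^ (H - 1/2) := Real.mul_rpow zero_le_two hs.le
      _ ≤ 2 * s ^ (H - 1/2) := by
          gcongr
          exact Real.rpow_le_self_of_one_le one_le_two (by linarith [hH.2])
  have hkernel : (u - v) ^ (H - 3/2) ≤ 4 * s ^ (H - 3/2) :=
    rpow_le_mul_rpow_of_div_le hs (by norm_num) ⟨by linarith [hH.1], by linarith [hH.2]⟩
      (by linarith)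
  have hpow : ((u + s) / (v + s)) ^ (H - 1/2) = (u + s) ^ (H - 1/2) * (v + s) ^ ((1:ℝ)/2 - H) := by
    rw [Real.div_rpow (by linarith) hvs0.le, show (1:ℝ)/2 - H = -(H - 1/2) by ring,
      Real.rpow_neg hvs0.le, div_eq_mul_inv]
  rw [abs_of_nonneg (mul_nonneg (sub_nonneg.mpr (Real.one_le_rpow hratio hp))
    (Real.rpow_nonneg (by linarith) _))]
  calc (((u + s) / (v + s)) ^ (H - 1/2) - 1) * (u - v) ^ (H - 3/2)
      ≤ ((u + s) ^ (H - 1/2) * (v + s) ^ ((1:ℝ)/2 - H)) * (4 * s ^ (H - 3/2)) :=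
        mul_le_mul (by linarith) hkernel (Real.rpow_nonneg (by linarith) _)
          (mul_nonneg (Real.rpow_nonneg (by linarith) _) (Real.rpow_nonneg hvs0.le _))
    _ ≤ (2 * s ^ (H - 1/2) * (v + s) ^ ((1:ℝ)/2 - H)) * (4 * s ^ (H - 3/2)) := by gcongr
    _ = 8 * s ^ (2*H - 2) * (v + s) ^ ((1:ℝ)/2 - H) := by
        rw [show 2*H - 2 = (H - 1/2) + (H - 3/2) by ring, Real.rpow_add hs]
        ring

theorem abs_shiftedKernelError_le_of_mem_Ico {t s v : ℝ} (hH : H ∈ Ioo (1/2 : ℝ) 1)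
    (hts : 4 * |t| < s) (hv : v ∈ Ico (-s/2) t) :
    |shiftedKernelError H t s v| ≤ C_H H * (|t| + 1) * (2 * s ^ (H - 3/2)) := by
  obtain ⟨hsv, hvt⟩ := hv
  have hs : 0 < s := by linarith [abs_nonneg t]
  have hp : H - 1/2 ∈ Icc (0 : ℝ) 1 := ⟨by linarith [hH.1], by linarith [hH.2]⟩
  rw [shiftedKernelError_eq hH (by linarith) hvt]
  refine abs_mul_integral_le hH (C_H_pos hH).le hvt fun u hvu hu => ?_
  have hu' := abs_le.mp hu
  have hvs0 : 0 < v + s := by linarith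
  have huv : 0 < u - v := by linarith
  have hratio : 1 ≤ (u + s) / (v + s) := (one_le_div hvs0).mpr (by linarith)
  have hbernoulli : ((u + s) / (v + s)) ^ (H - 1/2) - 1 ≤ (H - 1/2) * ((u - v) / (v + s)) := by
    rw [show (u + s) / (v + s) = 1 + (u - v) / (v + s) by field_simp; ring, sub_le_iff_le_add']
    exact rpow_one_add_le_one_add_mul_self (by linarith [div_nonneg huv.le hvs0.le]) hp.1 hp.2
  rw [abs_of_nonneg (mul_nonneg (sub_nonneg.mpr (Real.one_le_rpow hratio hp.1))
    (Real.rpow_nonneg huv.le _))]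
  calc (((u + s) / (v + s)) ^ (H - 1/2) - 1) * (u - v) ^ (H - 3/2)
      ≤ (H - 1/2) * ((u - v) / (v + s)) * (u - v) ^ (H - 3/2) := by gcongr
    _ = (H - 1/2) * (u - v) ^ (H - 1/2) / (v + s) := by
        rw [show H - 1/2 = (H - 3/2) + 1 by ring, Real.rpow_add_one huv.ne']
        ring
    _ ≤ 1 * s ^ (H - 1/2) / (s / 2) := by
        gcongr <;> linarith [hp.1, hp.2]
    _ = 2 * s ^ (H - 3/2) := by
        rw [show H - 3/2 = (H - 1/2) - 1 by ring, Real.rpow_sub_one hs.ne']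
        field_simp

variable {s M : ℝ} {f : ℝ → ℝ}

theorem lintegral_Iic_sq_le (hH : H < 1) (hs : 0 < s) (hM : 0 < M)
    (hf : ∀ v ≤ -s, |f v| ≤ M * (2 * (-v) ^ (H - 3/2))) :
    ∫⁻ v in Iic (-s), ENNReal.ofReal (f v ^ 2)
      ≤ ENNReal.ofReal (4 * M ^ 2 / (2 - 2*H) * s ^ (2*H - 2)) := by
  have hval : ∫ v in Iic (-s), (M * (2 * (-v) ^ (H - 3/2))) ^ 2
      = 4 * M ^ 2 / (2 - 2*H) * s ^ (2*H - 2) :=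
    calc ∫ v in Iic (-s), (M * (2 * (-v) ^ (H - 3/2))) ^ 2
        = ∫ v in Iic (-s), 4 * M ^ 2 * (-v) ^ (2*H - 3) := by
          refine setIntegral_congr_fun measurableSet_Iic fun v hv => ?_
          rw [mul_pow, mul_pow, rpow_sq (by linarith [mem_Iic.mp hv]),
            show 2 * (H - 3/2) = 2*H - 3 by ring]
          ring
      _ = 4 * M ^ 2 * ∫ x in Ioi s, x ^ (2*H - 3) := by
          rw [integral_const_mul, integral_comp_neg_Iic (f := fun x => x ^ (2*H - 3)), neg_neg]
      _ = 4 * M ^ 2 / (2 - 2*H) * s ^ (2*H - 2) := by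
          rw [integral_Ioi_rpow_of_lt (by linarith) hs, show 2*H - 3 + 1 = 2*H - 2 by ring,
            neg_div, ← div_neg, neg_sub]
          ring
  have hpos : 0 < 4 * M ^ 2 / (2 - 2*H) * s ^ (2*H - 2) := by
    have : 0 < 2 - 2*H := by linarith
    positivity
  calc ∫⁻ v in Iic (-s), ENNReal.ofReal (f v ^ 2)
      ≤ ENNReal.ofReal (∫ v in Iic (-s), (M * (2 * (-v) ^ (H - 3/2))) ^ 2) :=
        setLIntegral_ofReal_sq_le measurableSet_Iic
          (.of_integral_ne_zero (by rw [hval]; exact hpos.ne')) fun v hv => hf v hv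
    _ = _ := by rw [hval]

theorem lintegral_Ioo_sq_le (hH : H < 1) (hs : 0 < s) (hM : 0 < M)
    (hf : ∀ v ∈ Ioo (-s) (-s/2), |f v| ≤ M * (8 * s ^ (2*H - 2) * (v + s) ^ ((1:ℝ)/2 - H))) :
    ∫⁻ v in Ioo (-s) (-s/2), ENNReal.ofReal (f v ^ 2)
      ≤ ENNReal.ofReal (64 * M ^ 2 / (2 - 2*H) * s ^ (2*H - 2)) := by
  have h2H : 0 < 2 - 2*H := by linarith
  set K := 64 * M ^ 2 * s ^ (4*H - 4)
  have hval : ∫ v in Ioo (-s) (-s/2), (M * (8 * s ^ (2*H - 2) * (v + s) ^ ((1:ℝ)/2 - H))) ^ 2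
      = K * ((s / 2) ^ (2 - 2*H) / (2 - 2*H)) :=
    calc ∫ v in Ioo (-s) (-s/2), (M * (8 * s ^ (2*H - 2) * (v + s) ^ ((1:ℝ)/2 - H))) ^ 2
        = ∫ v in Ioo (-s) (-s/2), K * (v + s) ^ (1 - 2*H) := by
          refine setIntegral_congr_fun measurableSet_Ioo fun v hv => ?_
          rw [mul_pow, mul_pow, mul_pow, rpow_sq hs.le, rpow_sq (by linarith [hv.1]),
            show 2 * (2*H - 2) = 4*H - 4 by ring, show 2 * ((1:ℝ)/2 - H) = 1 - 2*H by ring]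
          ring
      _ = K * ∫ x in (0:ℝ)..(s/2), x ^ (1 - 2*H) := by
          rw [integral_const_mul, ← integral_Ioc_eq_integral_Ioo,
            ← intervalIntegral.integral_of_le (by linarith),
            intervalIntegral.integral_comp_add_right (fun x => x ^ (1 - 2*H))]
          ring_nf
      _ = K * ((s / 2) ^ (2 - 2*H) / (2 - 2*H)) := by
          rw [integral_rpow (Or.inl (by linarith)), show 1 - 2*H + 1 = 2 - 2*H by ring,
            Real.zero_rpow h2H.ne', sub_zero]
  have hpos : 0 < K * ((s / 2) ^ (2 - 2*H) / (2 - 2*H)) := by positivity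
  calc ∫⁻ v in Ioo (-s) (-s/2), ENNReal.ofReal (f v ^ 2)
      ≤ ENNReal.ofReal (K * ((s / 2) ^ (2 - 2*H) / (2 - 2*H))) := by
        rw [← hval]
        exact setLIntegral_ofReal_sq_le measurableSet_Ioo
          (.of_integral_ne_zero (by rw [hval]; exact hpos.ne')) hf
    _ ≤ ENNReal.ofReal (64 * M ^ 2 / (2 - 2*H) * s ^ (2*H - 2)) := by
        refine ENNReal.ofReal_le_ofReal ?_
        have hhalf : (s / 2) ^ (2 - 2*H) ≤ s ^ (2 - 2*H) :=
          Real.rpow_le_rpow (by positivity) (by linarith) h2H.le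
        calc K * ((s / 2) ^ (2 - 2*H) / (2 - 2*H))
            ≤ K * (s ^ (2 - 2*H) / (2 - 2*H)) := by gcongr
          _ = 64 * M ^ 2 / (2 - 2*H) * s ^ (2*H - 2) := by
              rw [show 2*H - 2 = (4*H - 4) + (2 - 2*H) by ring, Real.rpow_add hs]
              ring

theorem lintegral_Ico_sq_le {t : ℝ} (hs : 0 < s) (hts : t ≤ s/2)
    (hf : ∀ v ∈ Ico (-s/2) t, |f v| ≤ M * (2 * s ^ (H - 3/2))) :
    ∫⁻ v in Ico (-s/2) t, ENNReal.ofReal (f v ^ 2)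
      ≤ ENNReal.ofReal (4 * M ^ 2 * s ^ (2*H - 2)) := by
  calc ∫⁻ v in Ico (-s/2) t, ENNReal.ofReal (f v ^ 2)
      ≤ ENNReal.ofReal (∫ _ in Ico (-s/2) t, (M * (2 * s ^ (H - 3/2))) ^ 2) :=
        setLIntegral_ofReal_sq_le measurableSet_Ico (integrableOn_const measure_Ico_lt_top.ne) hf
    _ ≤ ENNReal.ofReal (4 * M ^ 2 * s ^ (2*H - 2)) := by
        refine ENNReal.ofReal_le_ofReal ?_
        rw [setIntegral_const, Real.volume_real_Ico, smul_eq_mul, mul_pow, mul_pow,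
          rpow_sq hs.le, show 2*H - 2 = 2 * (H - 3/2) + 1 by ring, Real.rpow_add_one hs.ne']
        have hlen : max (t - -s/2) 0 ≤ s := max_le (by linarith) hs.le
        calc max (t - -s/2) 0 * (M ^ 2 * (2 ^ 2 * s ^ (2 * (H - 3/2))))
            ≤ s * (M ^ 2 * (2 ^ 2 * s ^ (2 * (H - 3/2)))) := by gcongr
          _ = 4 * M ^ 2 * (s ^ (2 * (H - 3/2)) * s) := by ring

end

/-- L²-kernel estimate behind the convergence of the shifted Molchan–Golosov fractional
Lévy process to the Mandelbrot–Van Ness one: for `H ∈ (1/2,1)` and `t ∈ ℝ` there are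
`S > max(0,−t)` and `C > 0` such that for all `s > S`,
`∫_{−∞}^t (z_H(t+s,v+s) − z_H(s,v+s) − f_H(t,v))^2 dv ≤ C s^{2H−2}`. -/
theorem shifted_kernel_L2_estimate (H t : ℝ) (hH : H ∈ Set.Ioo (1/2 : ℝ) 1) :
    ∃ S > max 0 (-t), ∃ C > 0, ∀ s > S,
      (∫⁻ v in Set.Iio t,
          ENNReal.ofReal ((z_H H (t + s) (v + s) - z_H H s (v + s) - f_H H t v) ^ 2))
        ≤ ENNReal.ofReal (C * s ^ (2*H - 2)) := by
  set M := C_H H * (|t| + 1)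
  have hM : 0 < M := mul_pos (C_H_pos hH) (by positivity)
  have h2H : 0 < 2 - 2*H := by linarith [hH.2]
  refine ⟨4 * |t| + 1, max_lt (by positivity) (by linarith [neg_le_abs t, abs_nonneg t]),
    (4 / (2 - 2*H) + 64 / (2 - 2*H) + 4) * M ^ 2, by positivity, fun s hs => ?_⟩
  have hts : 4 * |t| < s := by linarith
  have hs0 : 0 < s := by linarith [abs_nonneg t]
  calc ∫⁻ v in Iio t, ENNReal.ofReal (shiftedKernelError H t s v ^ 2)
      ≤ (∫⁻ v in Iic (-s), ENNReal.ofReal (shiftedKernelError H t s v ^ 2))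
        + (∫⁻ v in Ioo (-s) (-s/2), ENNReal.ofReal (shiftedKernelError H t s v ^ 2))
        + ∫⁻ v in Ico (-s/2) t, ENNReal.ofReal (shiftedKernelError H t s v ^ 2) :=
        lintegral_Iio_le_add _ _ _
    _ ≤ ENNReal.ofReal (4 * M ^ 2 / (2 - 2*H) * s ^ (2*H - 2))
        + ENNReal.ofReal (64 * M ^ 2 / (2 - 2*H) * s ^ (2*H - 2))
        + ENNReal.ofReal (4 * M ^ 2 * s ^ (2*H - 2)) := by
        gcongr ?_ + ?_ + ?_
        · exact lintegral_Iic_sq_le hH.2 hs0 hM fun v hv =>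
            abs_shiftedKernelError_le_of_le_neg hH hts hv
        · exact lintegral_Ioo_sq_le hH.2 hs0 hM fun v hv =>
            abs_shiftedKernelError_le_of_mem_Ioo hH hts hv
        · exact lintegral_Ico_sq_le hs0 (by linarith [le_abs_self t, abs_nonneg t]) fun v hv =>
            abs_shiftedKernelError_le_of_mem_Ico hH hts hv
    _ = ENNReal.ofReal ((4 / (2 - 2*H) + 64 / (2 - 2*H) + 4) * M ^ 2 * s ^ (2*H - 2)) := by
        rw [← ENNReal.ofReal_add (by positivity) (by positivity),
          ← ENNReal.ofReal_add (by positivity) (by positivity)]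
        congr 1
        ring
end
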